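/- arXiv:2003.00767 — 9 statements merged into one kernel-verified Lean document; each statement's English description precedes it below -/
import Mathlib

section
/- Let C : 2^L → 2^L be an increasing and idempotent consequence function. Define the model function σ_C : 2^L → 2^L by σ_C(T) = L \ C(T). Then the canonical consequence function of σ_C equals C. -/
/-- If `C` is an increasing and idempotent consequence function, then the
canonical consequence function of the model function `σ_C(T) = L \ C(T)`
equals `C`. -/
theorem stmt2 {L : Type*} (C : Set L → Set L)
    (hinc : ∀ T : Set L, T ⊆ C T)
    (hidem : ∀ T : Set L, C (C T) ⊆ C T) :
    ∀ T : Set L, (⋃₀ {S : Set L | (C T)ᶜ ⊆ (C S)ᶜ}) = C T := by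
  intro T
  apply subset_antisymm
  · rintro x ⟨S, hS, hx⟩
    exact Set.compl_subset_compl.mp hS (hinc S hx)
  · intro x hx
    exact ⟨C T, Set.compl_subset_compl.mpr (hidem T), hx⟩
end

section
/- If a model function σ has the intersection property, then for every theory T it holds that σ(T) = σ(Cn_σ(T)), where Cn_σ is the canonical consequence function. -/
/-- If σ has the (generalized) intersection property, then for every theory T,
σ(T) = σ(Cn_σ(T)) where Cn_σ(T) = ⋃ { S : σ(T) ⊆ σ S }. -/
theorem stmt5 {L I : Type*} (σ : Set L → Set I)
    (hint : ∀ 𝒯 : Set (Set L), σ (⋃₀ 𝒯) = ⋂ T ∈ 𝒯, σ T) :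
    ∀ T : Set L, σ T = σ (⋃₀ {S : Set L | σ T ⊆ σ S}) := by
  intro T
  rw [hint]
  apply subset_antisymm
  · exact Set.subset_iInter₂ fun S hS => hS
  · exact Set.iInter₂_subset T (Set.Subset.refl (σ T))
end

section
/- If a model function σ has the intersection property, then its canonical consequence function Cn_σ is a closure operator (monotone, increasing, and idempotent). -/
/-- If σ has the intersection property, then its canonical consequence function
Cn_σ is a closure operator: monotone, increasing, and idempotent. -/
theorem stmt6 {L I : Type*} (σ : Set L → Set I)
    (hint : ∀ 𝒯 : Set (Set L), σ (⋃₀ 𝒯) = ⋂ T ∈ 𝒯, σ T) :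
    (∀ T1 T2 : Set L, T1 ⊆ T2 →
        (⋃₀ {S : Set L | σ T1 ⊆ σ S}) ⊆ (⋃₀ {S : Set L | σ T2 ⊆ σ S})) ∧
    (∀ T : Set L, T ⊆ ⋃₀ {S : Set L | σ T ⊆ σ S}) ∧
    (∀ T : Set L,
        (⋃₀ {S : Set L | σ (⋃₀ {S' : Set L | σ T ⊆ σ S'}) ⊆ σ S}) ⊆
          ⋃₀ {S : Set L | σ T ⊆ σ S}) := by
  have anti : ∀ A B : Set L, A ⊆ B → σ B ⊆ σ A := by
    intro A B hAB
    have h := hint {A, B}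
    have hU : ⋃₀ ({A, B} : Set (Set L)) = B := by
      simp [Set.sUnion_pair, Set.union_eq_right.mpr hAB]
    rw [hU] at h
    rw [h]
    intro x hx
    simp at hx
    exact hx.1
  refine ⟨?_, ?_, ?_⟩
  · intro T1 T2 h12 x hx
    obtain ⟨S, hS, hxS⟩ := hx
    exact ⟨S, (anti T1 T2 h12).trans hS, hxS⟩
  · intro T x hx
    exact ⟨T, Set.Subset.refl _, hx⟩
  · intro T x hx
    obtain ⟨S, hS, hxS⟩ := hx
    refine ⟨S, ?_, hxS⟩
    refine Set.Subset.trans ?_ hS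
    rw [hint]
    intro y hy
    simp only [Set.mem_iInter, Set.mem_setOf_eq]
    intro S' hS'
    exact hS' hy
end

section
/- Each strong equivalence class is a join-semilattice: if T₁ and T₂ are both strongly equivalent to T, then T₁ ∪ T₂ is strongly equivalent to T. -/
/-- Each strong equivalence class is a join-semilattice: if T1 ≡ₛ T and
T2 ≡ₛ T then T1 ∪ T2 ≡ₛ T. -/
theorem stmt12 {L I : Type*} (σ : Set L → Set I) (T T1 T2 : Set L)
    (h1 : ∀ U : Set L, σ (T1 ∪ U) = σ (T ∪ U))
    (h2 : ∀ U : Set L, σ (T2 ∪ U) = σ (T ∪ U)) :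
    ∀ U : Set L, σ ((T1 ∪ T2) ∪ U) = σ (T ∪ U) := by
  intro U
  have e1 : (T1 ∪ T2) ∪ U = T1 ∪ (T2 ∪ U) := Set.union_assoc ..
  have e2 : T ∪ (T2 ∪ U) = T2 ∪ (T ∪ U) := by
    rw [← Set.union_assoc, Set.union_comm T T2, Set.union_assoc]
  have e3 : T ∪ (T ∪ U) = T ∪ U := by
    rw [← Set.union_assoc, Set.union_self]
  rw [e1, h1, e2, h2, e3]
end

section
/- Each strong equivalence class is convex: if T₁ ≡ₛ T, T₃ ≡ₛ T, and T₁ ⊆ T₂ ⊆ T₃, then T₂ ≡ₛ T. -/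
/-- Each strong equivalence class is convex: T1 ≡ₛ T, T3 ≡ₛ T and
T1 ⊆ T2 ⊆ T3 imply T2 ≡ₛ T. -/
theorem stmt13 {L I : Type*} (σ : Set L → Set I) (T T1 T2 T3 : Set L)
    (h1 : ∀ U : Set L, σ (T1 ∪ U) = σ (T ∪ U))
    (h3 : ∀ U : Set L, σ (T3 ∪ U) = σ (T ∪ U))
    (h12 : T1 ⊆ T2) (h23 : T2 ⊆ T3) :
    ∀ U : Set L, σ (T2 ∪ U) = σ (T ∪ U) := by
  intro U
  have e1 : T1 ∪ (T2 ∪ U) = T2 ∪ U := by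
    rw [← Set.union_assoc, Set.union_eq_self_of_subset_left h12]
  have e3 : T3 ∪ (T2 ∪ U) = T3 ∪ U := by
    rw [← Set.union_assoc, Set.union_eq_self_of_subset_right h23]
  calc σ (T2 ∪ U) = σ (T1 ∪ (T2 ∪ U)) := by rw [e1]
    _ = σ (T ∪ (T2 ∪ U)) := h1 _
    _ = σ (T3 ∪ (T2 ∪ U)) := (h3 _).symm
    _ = σ (T3 ∪ U) := by rw [e3]
    _ = σ (T ∪ U) := h3 _
end

section
/- The relation ⊑ on strong equivalence classes, defined by [S] ⊑ [T] iff there exist S' ≡ₛ S and T' ≡ₛ T with S' ⊆ T', is a partial order (reflexive, antisymmetric, transitive). -/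
/-- Strong equivalence of theories in a logic (L, σ). -/
def SE {L I : Type*} (σ : Set L → Set I) (T1 T2 : Set L) : Prop :=
  ∀ U : Set L, σ (T1 ∪ U) = σ (T2 ∪ U)

/-- The relation ⊑ on strong equivalence classes (stated on representatives):
[S] ⊑ [T] iff some S' ≡ₛ S and T' ≡ₛ T satisfy S' ⊆ T'. -/
def cleq {L I : Type*} (σ : Set L → Set I) (S T : Set L) : Prop :=
  ∃ S' T' : Set L, SE σ S' S ∧ SE σ T' T ∧ S' ⊆ T'

lemma cleq_iff {L I : Type*} (σ : Set L → Set I) (S T : Set L) :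
    cleq σ S T ↔ SE σ (S ∪ T) T := by
  constructor
  · rintro ⟨S', T', hS, hT, hsub⟩ U
    have hST : S' ∪ T' = T' := Set.union_eq_self_of_subset_left hsub
    calc σ ((S ∪ T) ∪ U) = σ (S ∪ (T ∪ U)) := by rw [Set.union_assoc]
      _ = σ (S' ∪ (T ∪ U)) := (hS _).symm
      _ = σ (T ∪ (S' ∪ U)) := congrArg σ (by ac_rfl)
      _ = σ (T' ∪ (S' ∪ U)) := (hT _).symm
      _ = σ ((S' ∪ T') ∪ U) := congrArg σ (by ac_rfl)
      _ = σ (T' ∪ U) := by rw [hST]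
      _ = σ (T ∪ U) := hT _
  · intro h
    exact ⟨S, S ∪ T, fun U => rfl, h, Set.subset_union_left⟩

/-- ⊑ is a partial order on strong equivalence classes: reflexive,
antisymmetric (up to strong equivalence), and transitive. -/
theorem stmt14 {L I : Type*} (σ : Set L → Set I) :
    (∀ T : Set L, cleq σ T T) ∧
    (∀ S T : Set L, cleq σ S T → cleq σ T S → SE σ S T) ∧
    (∀ S T V : Set L, cleq σ S T → cleq σ T V → cleq σ S V) := by
  refine ⟨fun T => ⟨T, T, fun U => rfl, fun U => rfl, subset_rfl⟩, ?_, ?_⟩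
  · intro S T h1 h2
    rw [cleq_iff] at h1 h2
    intro U
    calc σ (S ∪ U) = σ ((T ∪ S) ∪ U) := (h2 U).symm
      _ = σ ((S ∪ T) ∪ U) := congrArg σ (by ac_rfl)
      _ = σ (T ∪ U) := h1 U
  · intro S T V h1 h2
    rw [cleq_iff] at h1 h2 ⊢
    intro U
    calc σ ((S ∪ V) ∪ U) = σ ((T ∪ V) ∪ (S ∪ U)) := (h2 (S ∪ U)).symm ▸
          congrArg σ (by ac_rfl : (S ∪ V) ∪ U = V ∪ (S ∪ U)) ▸ rfl
      _ = σ ((S ∪ T) ∪ (V ∪ U)) := congrArg σ (by ac_rfl)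
      _ = σ (T ∪ (V ∪ U)) := h1 _
      _ = σ ((T ∪ V) ∪ U) := congrArg σ (by rw [Set.union_assoc])
      _ = σ (V ∪ U) := h2 U
end

section
/- Let (L, σ) be a full logic that is covered (every strong equivalence class contains the union of all its members). Then the map σ'(T) = ⋃ { [S] : S ⊆ L, [T] ⊑ [S] } is a characterization logic: σ'(T₁) = σ'(T₂) iff T₁ ≡ₛ T₂, and σ'(⋃_{T∈𝒯} T) = ⋂_{T∈𝒯} σ'(T) for every family 𝒯. -/
/-- A logic is covered iff every strong equivalence class contains the union
of all its members. -/
def Covered {L I : Type*} (σ : Set L → Set I) : Prop :=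
  ∀ T : Set L, SE σ (⋃₀ {S : Set L | SE σ S T}) T

/-- The canonical characterizing semantics: σ'(T) is the union of all strong
equivalence classes [S] with [T] ⊑ [S]. -/
def charSem {L I : Type*} (σ : Set L → Set I) (T : Set L) : Set (Set L) :=
  {U : Set L | ∃ S : Set L, cleq σ T S ∧ SE σ U S}

namespace Stmt15Aux

variable {L I : Type*} (σ : Set L → Set I)

lemma SE_refl (T : Set L) : SE σ T T := fun _ => rfl

variable {σ}

lemma SE_symm {T1 T2 : Set L} (h : SE σ T1 T2) : SE σ T2 T1 := fun U => (h U).symm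

lemma SE_trans {T1 T2 T3 : Set L} (h : SE σ T1 T2) (h' : SE σ T2 T3) : SE σ T1 T3 :=
  fun U => (h U).trans (h' U)

lemma SE_union_left {A B : Set L} (h : SE σ A B) (C : Set L) :
    SE σ (A ∪ C) (B ∪ C) := by
  intro V
  rw [Set.union_assoc, Set.union_assoc]
  exact h (C ∪ V)

variable (σ)

/-- The cover of the strong equivalence class of `T`. -/
def cov (T : Set L) : Set L := ⋃₀ {S : Set L | SE σ S T}

variable {σ}

lemma subset_cov {S T : Set L} (h : SE σ S T) : S ⊆ cov σ T :=
  Set.subset_sUnion_of_mem h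

lemma SE_cov (hcov : Covered σ) (T : Set L) : SE σ (cov σ T) T := hcov T

/-- `[T] ⊑ [U]` iff `T ∪ cov U` is in the class of `U`. -/
lemma cleq_iff (hcov : Covered σ) (T U : Set L) :
    cleq σ T U ↔ SE σ (T ∪ cov σ U) U := by
  constructor
  · rintro ⟨A, B, hA, hB, hAB⟩
    have hAc : A ⊆ cov σ U := hAB.trans (subset_cov hB)
    have h1 : SE σ (T ∪ cov σ U) (A ∪ cov σ U) := SE_symm (SE_union_left hA _)
    have h2 : A ∪ cov σ U = cov σ U := Set.union_eq_self_of_subset_left hAc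
    have h3 : SE σ (A ∪ cov σ U) U := by rw [h2]; exact SE_cov hcov U
    exact SE_trans h1 h3
  · intro h
    exact ⟨T, T ∪ cov σ U, SE_refl σ T, h, Set.subset_union_left⟩

lemma mem_charSem (U T : Set L) : U ∈ charSem σ T ↔ cleq σ T U := by
  constructor
  · rintro ⟨S, ⟨A, B, hA, hB, hAB⟩, hu⟩
    exact ⟨A, B, hA, SE_trans hB (SE_symm hu), hAB⟩
  · intro h
    exact ⟨U, h, SE_refl σ U⟩

end Stmt15Aux

open Stmt15Aux in
/-- For a covered full logic, σ' is a characterization logic: its ordinary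
equivalence coincides with strong σ-equivalence, and it has the intersection
property. -/
theorem stmt15 {L I : Type*} (σ : Set L → Set I) (hcov : Covered σ) :
    (∀ T1 T2 : Set L, charSem σ T1 = charSem σ T2 ↔ SE σ T1 T2) ∧
    (∀ 𝒯 : Set (Set L), charSem σ (⋃₀ 𝒯) = ⋂ T ∈ 𝒯, charSem σ T) := by
  constructor
  · intro T1 T2
    constructor
    · intro heq
      have h12 : cleq σ T2 T1 := by
        have : T1 ∈ charSem σ T2 := heq ▸ (mem_charSem T1 T1).2
          ⟨T1, T1, SE_refl σ T1, SE_refl σ T1, subset_rfl⟩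
        exact (mem_charSem T1 T2).1 this
      have h21 : cleq σ T1 T2 := by
        have : T2 ∈ charSem σ T1 := heq ▸ (mem_charSem T2 T2).2
          ⟨T2, T2, SE_refl σ T2, SE_refl σ T2, subset_rfl⟩
        exact (mem_charSem T2 T1).1 this
      -- from these, T2 ⊆ cov T1 and T1 ⊆ cov T2
      have hs1 : T2 ⊆ cov σ T1 :=
        (Set.subset_union_left).trans (subset_cov ((cleq_iff hcov T2 T1).1 h12))
      have hs2 : T1 ⊆ cov σ T2 :=
        (Set.subset_union_left).trans (subset_cov ((cleq_iff hcov T1 T2).1 h21))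
      -- cov T1 ~ cov T1 ∪ cov T2 ~ cov T2
      have e1 : SE σ (cov σ T1 ∪ cov σ T2) (cov σ T2) := by
        have := SE_union_left (SE_cov hcov T1) (cov σ T2)
        rwa [Set.union_eq_self_of_subset_left hs2] at this
      have e2 : SE σ (cov σ T2 ∪ cov σ T1) (cov σ T1) := by
        have := SE_union_left (SE_cov hcov T2) (cov σ T1)
        rwa [Set.union_eq_self_of_subset_left hs1] at this
      have e3 : SE σ (cov σ T1) (cov σ T2) :=
        SE_trans (SE_symm (Set.union_comm _ _ ▸ e2)) e1
      exact SE_trans (SE_symm (SE_cov hcov T1)) (SE_trans e3 (SE_cov hcov T2))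
    · intro hse
      ext U
      rw [mem_charSem, mem_charSem]
      constructor
      · rintro ⟨A, B, hA, hB, hAB⟩
        exact ⟨A, B, SE_trans hA hse, hB, hAB⟩
      · rintro ⟨A, B, hA, hB, hAB⟩
        exact ⟨A, B, SE_trans hA (SE_symm hse), hB, hAB⟩
  · intro 𝒯
    ext U
    simp only [Set.mem_iInter, mem_charSem, cleq_iff hcov]
    constructor
    · intro h T hT
      have hTc : T ⊆ cov σ U :=
        (Set.subset_sUnion_of_mem hT).trans
          ((Set.subset_union_left).trans (subset_cov h))
      rw [Set.union_eq_self_of_subset_left hTc]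
      exact SE_cov hcov U
    · intro h
      have hsub : ⋃₀ 𝒯 ⊆ cov σ U := by
        apply Set.sUnion_subset
        intro T hT
        exact (Set.subset_union_left).trans (subset_cov (h T hT))
      rw [Set.union_eq_self_of_subset_left hsub]
      exact SE_cov hcov U
end

section
/- For any logic (L, σ), the map σ'_fin defined on finite theories by σ'_fin(T) = ⋃ { [S]_fin : S ⊆ L finite, T ⊆ S } is a finite-theory characterization logic: for finite T₁, T₂, σ'_fin(T₁) = σ'_fin(T₂) iff T₁ and T₂ are strongly equivalent over finite expansions, and σ'_fin(T₁ ∪ T₂) = σ'_fin(T₁) ∩ σ'_fin(T₂). -/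
/-- Strong equivalence over finite expansions. -/
def SEfin {L I : Type*} (σ : Set L → Set I) (T1 T2 : Set L) : Prop :=
  ∀ U : Set L, U.Finite → σ (T1 ∪ U) = σ (T2 ∪ U)

/-- The canonical finite-theory characterizing semantics: the union of all
finite-theory strong equivalence classes [S]_fin of finite supertheories S of T. -/
def charSemFin {L I : Type*} (σ : Set L → Set I) (T : Set L) : Set (Set L) :=
  {U : Set L | U.Finite ∧ ∃ S : Set L, S.Finite ∧ T ⊆ S ∧ SEfin σ U S}

private lemma mem_charSemFin_iff {L I : Type*} (σ : Set L → Set I) {T U : Set L}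
    (hT : T.Finite) (hU : U.Finite) :
    U ∈ charSemFin σ T ↔ ∀ V : Set L, V.Finite → σ (U ∪ V) = σ (T ∪ (U ∪ V)) := by
  constructor
  · rintro ⟨-, S, hS, hTS, hUS⟩ V hV
    have h1 := hUS (U ∪ V) (hU.union hV)
    have h2 := hUS (T ∪ (U ∪ V)) (hT.union (hU.union hV))
    have e1 : U ∪ (U ∪ V) = U ∪ V := by ext x; simp only [Set.mem_union]; tauto
    have e2 : U ∪ (T ∪ (U ∪ V)) = T ∪ (U ∪ V) := by
      ext x; simp only [Set.mem_union]; tauto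
    have e3 : S ∪ (T ∪ (U ∪ V)) = S ∪ (U ∪ V) := by
      rw [← Set.union_assoc, Set.union_eq_self_of_subset_right hTS]
    rw [e1] at h1
    rw [e2, e3] at h2
    exact h1.trans h2.symm
  · intro h
    refine ⟨hU, T ∪ U, hT.union hU, Set.subset_union_left, fun V hV => ?_⟩
    rw [Set.union_assoc]
    exact h V hV

/-- σ'_fin is a finite-theory characterization logic: finite-theory
characterization and finite-theory intersection. -/
theorem stmt16 {L I : Type*} (σ : Set L → Set I) :
    (∀ T1 T2 : Set L, T1.Finite → T2.Finite →
        (charSemFin σ T1 = charSemFin σ T2 ↔ SEfin σ T1 T2)) ∧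
    (∀ T1 T2 : Set L, T1.Finite → T2.Finite →
        charSemFin σ (T1 ∪ T2) = charSemFin σ T1 ∩ charSemFin σ T2) := by
  constructor
  · intro T1 T2 h1 h2
    constructor
    · intro heq V hV
      have m1 : T1 ∈ charSemFin σ T1 := by
        rw [mem_charSemFin_iff σ h1 h1]
        intro W hW
        have e : T1 ∪ (T1 ∪ W) = T1 ∪ W := by
          ext x; simp only [Set.mem_union]; tauto
        rw [e]
      have m2 : T2 ∈ charSemFin σ T2 := by
        rw [mem_charSemFin_iff σ h2 h2]
        intro W hW
        have e : T2 ∪ (T2 ∪ W) = T2 ∪ W := by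
          ext x; simp only [Set.mem_union]; tauto
        rw [e]
      rw [heq] at m1
      rw [← heq] at m2
      rw [mem_charSemFin_iff σ h2 h1] at m1
      rw [mem_charSemFin_iff σ h1 h2] at m2
      have a1 := m1 V hV
      have a2 := m2 V hV
      have e : T2 ∪ (T1 ∪ V) = T1 ∪ (T2 ∪ V) := by
        ext x; simp only [Set.mem_union]; tauto
      rw [e] at a1
      exact a1.trans a2.symm
    · intro hse
      ext U
      by_cases hU : U.Finite
      · rw [mem_charSemFin_iff σ h1 hU, mem_charSemFin_iff σ h2 hU]
        constructor
        · intro h V hV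
          exact (h V hV).trans (hse (U ∪ V) (hU.union hV))
        · intro h V hV
          exact (h V hV).trans (hse (U ∪ V) (hU.union hV)).symm
      · constructor <;> (rintro ⟨hf, -⟩; exact absurd hf hU)
  · intro T1 T2 h1 h2
    ext U
    by_cases hU : U.Finite
    · rw [Set.mem_inter_iff, mem_charSemFin_iff σ (h1.union h2) hU,
        mem_charSemFin_iff σ h1 hU, mem_charSemFin_iff σ h2 hU]
      constructor
      · intro h
        constructor
        · intro V hV
          have ha := h V hV
          have hb := h (T1 ∪ V) (h1.union hV)
          have e1 : U ∪ (T1 ∪ V) = T1 ∪ (U ∪ V) := by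
            ext x; simp only [Set.mem_union]; tauto
          have e2 : T1 ∪ T2 ∪ (T1 ∪ (U ∪ V)) = T1 ∪ T2 ∪ (U ∪ V) := by
            ext x; simp only [Set.mem_union]; tauto
          rw [e1, e2] at hb
          exact ha.trans hb.symm
        · intro V hV
          have ha := h V hV
          have hb := h (T2 ∪ V) (h2.union hV)
          have e1 : U ∪ (T2 ∪ V) = T2 ∪ (U ∪ V) := by
            ext x; simp only [Set.mem_union]; tauto
          have e2 : T1 ∪ T2 ∪ (T2 ∪ (U ∪ V)) = T1 ∪ T2 ∪ (U ∪ V) := by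
            ext x; simp only [Set.mem_union]; tauto
          rw [e1, e2] at hb
          exact ha.trans hb.symm
      · rintro ⟨ha, hb⟩ V hV
        have h2' := ha (T2 ∪ V) (h2.union hV)
        have e1 : U ∪ (T2 ∪ V) = T2 ∪ (U ∪ V) := by
          ext x; simp only [Set.mem_union]; tauto
        have e2 : T1 ∪ (T2 ∪ (U ∪ V)) = T1 ∪ T2 ∪ (U ∪ V) := by
          ext x; simp only [Set.mem_union]; tauto
        rw [e1, e2] at h2'
        exact (hb V hV).trans h2'
    · constructor
      · rintro ⟨hf, -⟩; exact absurd hf hU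
      · rintro ⟨⟨hf, -⟩, -⟩; exact absurd hf hU
end

section
/- Let σ be a semantics whose extensions are conflict-free, and suppose σ assigns at least one extension to every AF in a class C. Then the σ-parametrized semantics adm^σ, taking the ⊆-maximal admissible sets contained in the intersection of all σ-extensions, assigns exactly one extension to every AF in C. -/
/-- Conflict-freeness in an AF (A, R). -/
def ConflictFree {A : Type*} (R : A → A → Prop) (E : Set A) : Prop :=
  ∀ a ∈ E, ∀ b ∈ E, ¬ R a b

/-- Admissibility: conflict-free and every element is defended. -/
def Admissible {A : Type*} (R : A → A → Prop) (E : Set A) : Prop :=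
  ConflictFree R E ∧ ∀ a ∈ E, ∀ b, R b a → ∃ c ∈ E, R c b

/-- If the base semantics σ yields only conflict-free extensions and is
universally defined on a class C of AFs, then the σ-parametrized semantics
adm^σ (⊆-maximal admissible subsets of the intersection of all σ-extensions)
is uniquely defined on C. -/
theorem stmt18 {A : Type*} (C : Set (A → A → Prop))
    (σ : (A → A → Prop) → Set (Set A))
    (hcf : ∀ R : A → A → Prop, ∀ E ∈ σ R, ConflictFree R E)
    (hne : ∀ R ∈ C, (σ R).Nonempty) :
    ∀ R ∈ C, ∃! E : Set A,
      Admissible R E ∧ E ⊆ (⋂ S ∈ σ R, S) ∧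
        ∀ E' : Set A, Admissible R E' → E' ⊆ (⋂ S ∈ σ R, S) → E ⊆ E' → E' = E := by
  intro R hR
  set I : Set A := ⋂ S ∈ σ R, S with hI
  obtain ⟨S, hS⟩ := hne R hR
  have hIS : I ⊆ S := Set.biInter_subset_of_mem hS
  have hIcf : ConflictFree R I := fun a ha b hb => hcf R S hS a (hIS ha) b (hIS hb)
  set U : Set A := ⋃₀ {E | Admissible R E ∧ E ⊆ I} with hU
  have hUI : U ⊆ I := by
    rintro x ⟨E, ⟨_, hEI⟩, hx⟩
    exact hEI hx
  have hUadm : Admissible R U := by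
    constructor
    · intro a ha b hb
      exact hIcf a (hUI ha) b (hUI hb)
    · rintro a ⟨E, ⟨⟨_, hdef⟩, hEI⟩, haE⟩ b hba
      obtain ⟨c, hc, hcb⟩ := hdef a haE b hba
      exact ⟨c, ⟨E, ⟨⟨‹ConflictFree R E›, hdef⟩, hEI⟩, hc⟩, hcb⟩
  have hmax : ∀ E' : Set A, Admissible R E' → E' ⊆ I → E' ⊆ U :=
    fun E' hadm hEI x hx => ⟨E', ⟨hadm, hEI⟩, hx⟩
  refine ⟨U, ⟨hUadm, hUI, fun E' hadm hEI hUE' => Set.Subset.antisymm (hmax E' hadm hEI) hUE'⟩, ?_⟩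
  rintro E ⟨hEadm, hEI, hEmax⟩
  exact (hEmax U hUadm hUI (hmax E hEadm hEI)).symm
end
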